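/- arXiv:1401.6025 — 2 statements merged into one kernel-verified Lean document; each statement's English description precedes it below -/
import Mathlib

section
/- If C is a linear code of length n over F_q admitting a t-error correcting pair (A,B) (i.e., (A*B) ⊥ C, dim A > t, d(B^⊥) > t, and d(A) + d(C) > n), then for any received word y = c + e with c ∈ C and wt(e) ≤ t, the codeword c is uniquely determined by y; that is, if c' ∈ C and wt(y - c') ≤ t then c' = c. -/
variable {Fq : Type} [Field Fq]

/-- The Schur (coordinatewise) product of two linear codes: the span of all
coordinatewise products `a * b` with `a ∈ A`, `b ∈ B`. -/
def schurProd {ι : Type} [Fintype ι] (A B : Submodule Fq (ι → Fq)) :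
    Submodule Fq (ι → Fq) :=
  Submodule.span Fq {v | ∃ a ∈ A, ∃ b ∈ B, v = a * b}

/-- The dual code with respect to the standard inner product. -/
def dualCode {ι : Type} [Fintype ι] (C : Submodule Fq (ι → Fq)) :
    Submodule Fq (ι → Fq) where
  carrier := {x | ∀ c ∈ C, ∑ i, x i * c i = 0}
  add_mem' := by
    intro a b ha hb c hc
    simp only [Set.mem_setOf_eq] at *
    simp [add_mul, Finset.sum_add_distrib, ha c hc, hb c hc]
  zero_mem' := by intro c hc; simp
  smul_mem' := by
    intro r a ha c hc
    simp only [Set.mem_setOf_eq] at *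
    simp [smul_eq_mul, mul_assoc, ← Finset.mul_sum, ha c hc]

/-- Two codes are orthogonal if all standard inner products vanish. -/
def orthogonal {ι : Type} [Fintype ι] (A C : Submodule Fq (ι → Fq)) : Prop :=
  ∀ a ∈ A, ∀ c ∈ C, ∑ i, a i * c i = 0

/-- The minimum Hamming distance (= minimum weight of a nonzero codeword). -/
noncomputable def minDist {ι : Type} [Fintype ι] [DecidableEq Fq]
    (C : Submodule Fq (ι → Fq)) : ℕ :=
  sInf {w | ∃ c ∈ C, c ≠ 0 ∧ hammingNorm c = w}

/-- A code with a `t`-error correcting pair decodes uniquely up to `t` errors. -/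
theorem ecp_unique_decoding [DecidableEq Fq] {n t : ℕ}
    (A B C : Submodule Fq (Fin n → Fq))
    (hE1 : orthogonal (schurProd A B) C)
    (hE2 : t < Module.finrank Fq A)
    (hE3 : t < minDist (dualCode B))
    (hE4 : n < minDist A + minDist C)
    (y c e : Fin n → Fq) (hc : c ∈ C) (he : hammingNorm e ≤ t) (hy : y = c + e)
    (c' : Fin n → Fq) (hc' : c' ∈ C) (hw : hammingNorm (y - c') ≤ t) :
    c' = c := by
  classical
  by_contra hne
  set x : Fin n → Fq := c - c' with hxdef
  have hxC : x ∈ C := sub_mem hc hc'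
  have hxne : x ≠ 0 := sub_ne_zero.mpr (fun h => hne h.symm)
  -- relation: if e i = 0 then x i = (y - c') i
  have hxe : ∀ i, e i = 0 → x i = (y - c') i := by
    intro i hi
    simp [hxdef, hy, hi, Pi.sub_apply, Pi.add_apply]
  -- minDist lower bound lemma
  have hmin : ∀ (D : Submodule Fq (Fin n → Fq)) (v : Fin n → Fq),
      v ∈ D → v ≠ 0 → minDist D ≤ hammingNorm v := by
    intro D v hv hvne
    exact Nat.sInf_le ⟨v, hv, hvne, rfl⟩
  -- find nonzero a ∈ A vanishing on supp e
  let S : Finset (Fin n) := Finset.univ.filter fun i => e i ≠ 0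
  have hScard : S.card ≤ t := he
  let φ : A →ₗ[Fq] (S → Fq) :=
    { toFun := fun a i => (a : Fin n → Fq) i
      map_add' := by intros; rfl
      map_smul' := by intros; rfl }
  have h1 : Module.finrank Fq (LinearMap.range φ) ≤ t := by
    calc Module.finrank Fq (LinearMap.range φ) ≤ Module.finrank Fq (S → Fq) :=
          (LinearMap.range φ).finrank_le
      _ = S.card := by simp [Module.finrank_pi]
      _ ≤ t := hScard
  have h2 : 0 < Module.finrank Fq (LinearMap.ker φ) := by
    have h3 := LinearMap.finrank_range_add_finrank_ker φ
    omega
  have : Nontrivial (LinearMap.ker φ) := Module.finrank_pos_iff.mp h2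
  obtain ⟨v, hv0⟩ := exists_ne (0 : LinearMap.ker φ)
  set a : Fin n → Fq := ((v : A) : Fin n → Fq) with hadef
  have haA : a ∈ A := (v : A).2
  have hane : a ≠ 0 := by
    intro h
    apply hv0
    have : (v : A) = 0 := Subtype.ext h
    exact Subtype.ext this
  have haz : ∀ i, e i ≠ 0 → a i = 0 := by
    intro i hi
    have hk : φ (v : A) = 0 := v.2
    have := congrFun hk ⟨i, by simp [S, hi]⟩
    exact this
  -- a * x ∈ dualCode B
  have haxB : a * x ∈ dualCode B := by
    intro b hb
    have hab : a * b ∈ schurProd A B := Submodule.subset_span ⟨a, haA, b, hb, rfl⟩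
    have := hE1 (a * b) hab x hxC
    rw [← this]
    apply Finset.sum_congr rfl
    intro i _
    simp [Pi.mul_apply]
    ring
  -- weight of a * x ≤ t
  have haxw : hammingNorm (a * x) ≤ t := by
    refine le_trans ?_ hw
    apply Finset.card_le_card
    intro i hi
    simp only [Finset.mem_filter, Finset.mem_univ, true_and, Pi.mul_apply] at hi ⊢
    have hai : a i ≠ 0 := fun h => hi (by simp [h])
    have hxi : x i ≠ 0 := fun h => hi (by simp [h])
    have hei : e i = 0 := by
      by_contra hei
      exact hai (haz i hei)
    rw [← hxe i hei]
    exact hxi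
  -- hence a * x = 0
  have hax0 : a * x = 0 := by
    by_contra h
    have := hmin (dualCode B) (a * x) haxB h
    omega
  -- disjoint supports
  have hdisj : ∀ i, a i ≠ 0 → x i = 0 := by
    intro i hai
    by_contra hxi
    have : a i * x i = 0 := congrFun hax0 i
    exact hxi (by
      rcases mul_eq_zero.mp this with h | h
      · exact absurd h hai
      · exact h)
  -- weight bound: wt a + wt x ≤ n
  have hsum : hammingNorm a + hammingNorm x ≤ n := by
    have hd : Disjoint (Finset.univ.filter fun i => a i ≠ 0)
        (Finset.univ.filter fun i => x i ≠ 0) := by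
      rw [Finset.disjoint_left]
      intro i hi hj
      simp only [Finset.mem_filter, Finset.mem_univ, true_and] at hi hj
      exact hj (hdisj i hi)
    calc hammingNorm a + hammingNorm x
        = ((Finset.univ.filter fun i => a i ≠ 0) ∪
           (Finset.univ.filter fun i => x i ≠ 0)).card := by
          rw [Finset.card_union_of_disjoint hd]; rfl
      _ ≤ (Finset.univ : Finset (Fin n)).card := Finset.card_le_card (Finset.subset_univ _)
      _ = n := by simp
  have hA := hmin A a haA hane
  have hC := hmin C x hxC hxne
  omega
end

section
/- Let A, B, C be linear codes in F_q^n with (A*B) ⊥ C, dim A > t, d(B^⊥) > t, d(A) + d(C) > n. Let y = c + e with c ∈ C, wt(e) ≤ t. Define the space M = {a ∈ A : (a * b)·y = 0 for all b ∈ B}. Then M equals {a ∈ A : a_i = 0 for all i ∈ supp(e)}; in particular M is nonzero. -/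
variable {Fq : Type} [Field Fq]

/-- The syndrome space `M = {a ∈ A : (a*b)·y = 0 ∀ b ∈ B}` equals the space of
elements of `A` vanishing on the support of the error, and `M` is nonzero. -/
theorem ecp_kernel_eq_vanishing [DecidableEq Fq] {n t : ℕ}
    (A B C : Submodule Fq (Fin n → Fq))
    (hE1 : orthogonal (schurProd A B) C)
    (hE2 : t < Module.finrank Fq A)
    (hE3 : t < minDist (dualCode B))
    (hE4 : n < minDist A + minDist C)
    (y c e : Fin n → Fq) (hc : c ∈ C) (he : hammingNorm e ≤ t) (hy : y = c + e) :
    {a : Fin n → Fq | a ∈ A ∧ ∀ b ∈ B, ∑ i, (a i * b i) * y i = 0} =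
      {a : Fin n → Fq | a ∈ A ∧ ∀ i : Fin n, e i ≠ 0 → a i = 0} ∧
    ∃ a ∈ A, a ≠ 0 ∧ ∀ b ∈ B, ∑ i, (a i * b i) * y i = 0 := by
  classical
  subst hy
  have key : ∀ a ∈ A, ∀ b ∈ B, ∑ i, (a i * b i) * (c + e) i
      = ∑ i, (a i * b i) * e i := by
    intro a ha b hb
    have h0 : ∑ i, (a * b) i * c i = 0 :=
      hE1 _ (Submodule.subset_span ⟨a, ha, b, hb, rfl⟩) c hc
    simp only [Pi.mul_apply] at h0
    simp only [Pi.add_apply, mul_add, Finset.sum_add_distrib, h0, zero_add]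
  have hsuff : ∀ a ∈ A, (∀ i, e i ≠ 0 → a i = 0) →
      ∀ b ∈ B, ∑ i, (a i * b i) * (c + e) i = 0 := by
    intro a ha hz b hb
    rw [key a ha b hb]
    apply Finset.sum_eq_zero
    intro i _
    by_cases hei : e i = 0
    · simp [hei]
    · simp [hz i hei]
  constructor
  · ext a
    simp only [Set.mem_setOf_eq]
    constructor
    · rintro ⟨ha, hab⟩
      refine ⟨ha, ?_⟩
      have hv : (a * e) ∈ dualCode B := by
        intro b hb
        have h := hab b hb
        rw [key a ha b hb] at h
        rw [← h]
        apply Finset.sum_congr rfl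
        intro i _
        simp only [Pi.mul_apply]
        ring
      have hv0 : a * e = 0 := by
        by_contra hne
        have h1 : minDist (dualCode B) ≤ hammingNorm (a * e) :=
          Nat.sInf_le ⟨a * e, hv, hne, rfl⟩
        have h2 : hammingNorm (a * e) ≤ hammingNorm e := by
          apply Finset.card_le_card
          intro i hi
          simp only [Finset.mem_filter, Finset.mem_univ, true_and,
            Pi.mul_apply] at hi ⊢
          exact fun h => hi (by simp [h])
        omega
      intro i hei
      have h := congrFun hv0 i
      simp only [Pi.mul_apply, Pi.zero_apply, mul_eq_zero] at h
      rcases h with h | h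
      · exact h
      · exact absurd h hei
    · rintro ⟨ha, hz⟩
      exact ⟨ha, hsuff a ha hz⟩
  · let f : A →ₗ[Fq] ({i : Fin n // e i ≠ 0} → Fq) :=
      { toFun := fun a i => a.1 i.1
        map_add' := fun x y => rfl
        map_smul' := fun r x => rfl }
    have hcard : Fintype.card {i : Fin n // e i ≠ 0} ≤ t := by
      rw [Fintype.card_subtype]
      exact le_trans (le_of_eq rfl) he
    have hninj : ¬ Function.Injective f := by
      intro hinj
      have h := LinearMap.finrank_le_finrank_of_injective hinj
      rw [Module.finrank_fintype_fun_eq_card] at h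
      omega
    rw [Function.not_injective_iff] at hninj
    obtain ⟨a1, a2, hfa, hne⟩ := hninj
    have hz : ∀ i, e i ≠ 0 → (a1.1 - a2.1) i = 0 := by
      intro i hi
      have := congrFun hfa ⟨i, hi⟩
      simp only [f, LinearMap.coe_mk, AddHom.coe_mk] at this
      simp [this]
    refine ⟨a1.1 - a2.1, sub_mem a1.2 a2.2, ?_, hsuff _ (sub_mem a1.2 a2.2) hz⟩
    intro h0
    apply hne
    ext i
    have := congrFun h0 i
    simp only [Pi.sub_apply, Pi.zero_apply, sub_eq_zero] at this
    exact this
end
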